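/- arXiv:1110.1137 — 3 statements merged into one kernel-verified Lean document; each statement's English description precedes it below -/
import Mathlib

section
/- For each n ∈ ℕ there exists ε > 0 such that the initial segment (a_0(q), a_1(q), …, a_n(q)) of the greedy firing sequence is the same for all q ∈ (1−ε, 1). -/
/-- Auxiliary sequence: `greedyAux q n = (a_n(q), S_n(q))` where
`S_n(q) = ∑_{j=0}^n a_j(q) q^j`; the next shooter is `-a_n` iff
`f_n(q) = a_n(q) · S_n(q) ≥ 0`. -/
noncomputable def greedyAux (q : ℝ) : ℕ → ℤ × ℝ
  | 0 => (-1, -1)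
  | n + 1 =>
    let p := greedyAux q n
    let next : ℤ := if 0 ≤ (p.1 : ℝ) * p.2 then -p.1 else p.1
    (next, p.2 + (next : ℝ) * q ^ (n + 1))

/-- The greedy firing sequence `a(q) : ℕ → {-1, 1}`: `a 0 = -1`, and
`a (n+1) = -a n` if `f_n(q) = a_n · (∑_{j=0}^n a_j q^j) ≥ 0`, else `a (n+1) = a n`. -/
noncomputable def greedySeq (q : ℝ) (n : ℕ) : ℤ := (greedyAux q n).1

/-!
As `q → 1⁻`, the partial sum `S_n(q) = ∑_{j ≤ n} a_j(q) q^j` is eventually a fixed polynomial in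
`q`, and a polynomial has eventually constant sign to the left of any point (factor out the
root there). Since `a_{n+1}(q)` depends only on `a_n(q)` and the sign of `S_n(q)`, induction on `n`
shows that every initial segment is eventually constant as `q → 1⁻`.
-/

open Filter Topology Polynomial

theorem Polynomial.exists_eventually_sign_eval_eq_nhdsLT {𝕜 : Type*} [Field 𝕜] [LinearOrder 𝕜]
    [IsStrictOrderedRing 𝕜] [TopologicalSpace 𝕜] [OrderTopology 𝕜] (P : 𝕜[X]) (a : 𝕜) :
    ∃ s : SignType, ∀ᶠ x in 𝓝[<] a, SignType.sign (P.eval x) = s := by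
  rcases eq_or_ne P 0 with rfl | hP
  · exact ⟨0, by simp⟩
  obtain ⟨Q, hPQ, hQ⟩ := P.exists_eq_pow_rootMultiplicity_mul_and_not_dvd hP a
  generalize P.rootMultiplicity a = k at hPQ
  subst hPQ
  have hQa : Q.eval a ≠ 0 := by rwa [dvd_iff_isRoot] at hQ
  have hQ_cont : ContinuousAt (fun x => SignType.sign (Q.eval x)) a :=
    (continuousAt_sign_of_ne_zero hQa).comp (f := (Q.eval ·)) Q.continuous.continuousAt
  have hQ_sign : ∀ᶠ x in 𝓝[<] a, SignType.sign (Q.eval x) = SignType.sign (Q.eval a) :=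
    nhdsWithin_le_nhds (hQ_cont.eventually_mem (s := {_}) (mem_nhds_discrete.2 rfl))
  refine ⟨(-1) ^ k * SignType.sign (Q.eval a), ?_⟩
  filter_upwards [hQ_sign, self_mem_nhdsWithin] with x hx (hxa : x < a)
  rw [eval_mul, eval_pow, eval_sub, eval_X, eval_C, sign_mul, sign_pow, hx,
    sign_neg (sub_neg.2 hxa)]

theorem greedyAux_snd_eq_sum (q : ℝ) (n : ℕ) :
    (greedyAux q n).2 = ∑ j ∈ Finset.range (n + 1), (greedySeq q j : ℝ) * q ^ j := by
  induction n with
  | zero => simp [greedyAux, greedySeq]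
  | succ n ih =>
    rw [Finset.sum_range_succ, ← ih]
    rfl

theorem greedySeq_succ (q : ℝ) (n : ℕ) :
    greedySeq q (n + 1) =
      if 0 ≤ (greedySeq q n : ℝ) * ∑ j ∈ Finset.range (n + 1), (greedySeq q j : ℝ) * q ^ j
      then -greedySeq q n else greedySeq q n := by
  rw [← greedyAux_snd_eq_sum]
  rfl

theorem exists_eventually_greedySeq_eq_nhdsLT (a : ℝ) (n : ℕ) :
    ∃ b : ℕ → ℤ, ∀ᶠ q in 𝓝[<] a, ∀ i ≤ n, greedySeq q i = b i := by
  induction n with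
  | zero => exact ⟨fun _ => -1, Eventually.of_forall fun q i hi => by
      rw [Nat.le_zero.1 hi]; rfl⟩
  | succ n ih =>
    obtain ⟨b, hb⟩ := ih
    set P : ℝ[X] := ∑ j ∈ Finset.range (n + 1), C (b j : ℝ) * X ^ j
    obtain ⟨s, hs⟩ := P.exists_eventually_sign_eval_eq_nhdsLT a
    let next : ℤ := if 0 ≤ SignType.sign (b n : ℝ) * s then -b n else b n
    refine ⟨fun i => if i = n + 1 then next else b i, ?_⟩
    filter_upwards [hb, hs] with q hbq hsq i hi
    rcases Nat.le_succ_iff.1 hi with hi | rfl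
    · simp only [if_neg (by omega : i ≠ n + 1), hbq i hi]
    have hsum : ∑ j ∈ Finset.range (n + 1), (greedySeq q j : ℝ) * q ^ j = P.eval q := by
      simp only [P, eval_finsetSum, eval_mul, eval_C, eval_pow, eval_X]
      exact Finset.sum_congr rfl fun j hj => by
        rw [hbq j (Nat.lt_succ_iff.1 (Finset.mem_range.1 hj))]
    have hdecision : 0 ≤ (b n : ℝ) * P.eval q ↔ 0 ≤ SignType.sign (b n : ℝ) * s := by
      rw [← sign_nonneg_iff, sign_mul, hsq]
    rw [greedySeq_succ, hsum, hbq n le_rfl, if_pos rfl]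
    exact if_congr hdecision rfl rfl

/-- For each `n ∈ ℕ` there exists `ε > 0` such that the initial segment
`(a_0(q), …, a_n(q))` of the greedy firing sequence is the same for all `q ∈ (1-ε, 1)`. -/
theorem greedySeq_initialSegment_eventually_constant (n : ℕ) :
    ∃ ε > (0 : ℝ), ∀ q ∈ Set.Ioo (1 - ε) (1 : ℝ), ∀ q' ∈ Set.Ioo (1 - ε) (1 : ℝ),
      ∀ i ≤ n, greedySeq q i = greedySeq q' i := by
  obtain ⟨b, hb⟩ := exists_eventually_greedySeq_eq_nhdsLT 1 n
  obtain ⟨l, hl, hsub⟩ := mem_nhdsLT_iff_exists_Ioo_subset.1 hb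
  refine ⟨1 - l, sub_pos.2 hl, fun q hq q' hq' i hi => ?_⟩
  rw [sub_sub_cancel] at hq hq'
  rw [hsub hq i hi, hsub hq' i hi]
end

section
/- Fix q ∈ (0,1) and suppose the greedy firing sequence a(q) takes the value 1 for infinitely many indices and the value −1 for infinitely many indices. Then Bob's limiting winning probability equals Alice's: ∑_{i : a_i(q) = 1} q^i = ∑_{i : a_i(q) = −1} q^i = 1/(2(1−q)); equivalently, each player's probability of eventually winning is (1−q) · 1/(2(1−q)) = 1/2. -/
/-!
Write `S_n = ∑_{j ≤ n} a_j q^j` and `f_n = a_n S_n`. The greedy rule gives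
`f_{n+1} = q^{n+1} - |f_n|`, hence `|S_{n+1}| = |q^{n+1} - |S_n||`, so once `|S_n| ≤ q^n` the
bound `q^n` persists for all later partial sums. Since the shooter changes infinitely often,
`f_n ≥ 0` for infinitely many `n`, and for those `|S_n| = f_n ≤ q^n`. Thus `S_n → 0`: the two
players' sums of `q^i` are equal, and together they make up the geometric series `1/(1-q)`.
-/

open Filter Topology

lemma tsum_subtype_eq_half_of_tsum_sign_mul_eq_zero {α : Type*} {f : α → ℝ} (hf : Summable f)
    (ε : α → ℤ) (hε : ∀ i, ε i = 1 ∨ ε i = -1) (h0 : ∑' i, (ε i : ℝ) * f i = 0) :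
    ∑' i : {i // ε i = 1}, f i = (∑' i, f i) / 2 ∧
      ∑' i : {i // ε i = -1}, f i = (∑' i, f i) / 2 := by
  set P := {i | ε i = 1}
  set N := {i | ε i = -1}
  have hsum : ∀ i, P.indicator f i + N.indicator f i = f i := fun i => by
    rcases hε i with h | h <;> simp [P, N, Set.indicator, h]
  have hdiff : ∀ i, P.indicator f i - N.indicator f i = ε i * f i := fun i => by
    rcases hε i with h | h <;> simp [P, N, Set.indicator, h]
  have hP : ∑' i : {i // ε i = 1}, f i = ∑' i, P.indicator f i := tsum_subtype P f
  have hN : ∑' i : {i // ε i = -1}, f i = ∑' i, N.indicator f i := tsum_subtype N f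
  have hadd : ∑' i, P.indicator f i + ∑' i, N.indicator f i = ∑' i, f i := by
    rw [← (hf.indicator P).tsum_add (hf.indicator N)]
    exact tsum_congr hsum
  have hsub : ∑' i, P.indicator f i - ∑' i, N.indicator f i = 0 := by
    rw [← (hf.indicator P).tsum_sub (hf.indicator N), ← h0]
    exact tsum_congr hdiff
  constructor <;> linarith

namespace GreedySeq

variable (q : ℝ)

/-- The quantity `f_n = a_n · S_n` deciding whether the shooter changes after round `n`. -/
noncomputable def margin (n : ℕ) : ℝ := (greedySeq q n : ℝ) * (greedyAux q n).2

lemma greedySeq_succ (n : ℕ) :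
    greedySeq q (n + 1) = if 0 ≤ margin q n then -greedySeq q n else greedySeq q n := rfl

lemma greedyAux_snd_succ (n : ℕ) :
    (greedyAux q (n + 1)).2 = (greedyAux q n).2 + (greedySeq q (n + 1) : ℝ) * q ^ (n + 1) :=
  rfl

lemma greedySeq_eq_one_or_neg_one (n : ℕ) : greedySeq q n = 1 ∨ greedySeq q n = -1 := by
  induction n with
  | zero => exact Or.inr rfl
  | succ n ih => rw [greedySeq_succ]; rcases ih with h | h <;> rw [h] <;> split_ifs <;> simp

lemma abs_greedySeq (n : ℕ) : |(greedySeq q n : ℝ)| = 1 := by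
  rcases greedySeq_eq_one_or_neg_one q n with h | h <;> simp [h]

lemma greedySeq_mul_self (n : ℕ) : (greedySeq q n : ℝ) * greedySeq q n = 1 := by
  rcases greedySeq_eq_one_or_neg_one q n with h | h <;> simp [h]

lemma greedyAux_snd_eq_sum (n : ℕ) :
    (greedyAux q n).2 = ∑ i ∈ Finset.range (n + 1), (greedySeq q i : ℝ) * q ^ i := by
  induction n with
  | zero => simp [greedySeq, greedyAux]
  | succ n ih => rw [greedyAux_snd_succ, ih, Finset.sum_range_succ _ (n + 1)]

lemma margin_succ (n : ℕ) : margin q (n + 1) = q ^ (n + 1) - |margin q n| := by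
  rw [margin, greedyAux_snd_succ, mul_add, ← mul_assoc, greedySeq_mul_self, one_mul,
    greedySeq_succ]
  split_ifs with h
  · rw [abs_of_nonneg h, margin]; push_cast; ring
  · rw [abs_of_neg (not_le.mp h), margin]; ring

lemma margin_le_pow (n : ℕ) : margin q n ≤ q ^ n := by
  cases n with
  | zero => norm_num [margin, greedySeq, greedyAux]
  | succ n => rw [margin_succ]; linarith [abs_nonneg (margin q n)]

lemma abs_margin (n : ℕ) : |margin q n| = |(greedyAux q n).2| := by
  rw [margin, abs_mul, abs_greedySeq, one_mul]

lemma abs_greedyAux_snd_succ (n : ℕ) :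
    |(greedyAux q (n + 1)).2| = |q ^ (n + 1) - abs (greedyAux q n).2| := by
  rw [← abs_margin, margin_succ, abs_margin]

variable {q}

lemma abs_greedyAux_snd_le_of_le (hq₀ : 0 ≤ q) (hq₁ : q ≤ 1) {n : ℕ}
    (hn : |(greedyAux q n).2| ≤ q ^ n) {m : ℕ} (hm : n ≤ m) : |(greedyAux q m).2| ≤ q ^ n := by
  induction m, hm using Nat.le_induction with
  | base => exact hn
  | succ m hnm ih =>
    have hpow : q ^ (m + 1) ≤ q ^ n := pow_le_pow_of_le_one hq₀ hq₁ (by omega)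
    rw [abs_greedyAux_snd_succ, abs_le]
    constructor <;> linarith [pow_nonneg hq₀ (m + 1), abs_nonneg (greedyAux q m).2]

lemma frequently_margin_nonneg (h₁ : {i : ℕ | greedySeq q i = 1}.Infinite)
    (h₂ : {i : ℕ | greedySeq q i = -1}.Infinite) : ∃ᶠ n in atTop, 0 ≤ margin q n := by
  rw [frequently_atTop]
  intro N
  by_contra! hneg
  have hconst : ∀ n, N ≤ n → greedySeq q n = greedySeq q N := by
    intro n hn
    induction n, hn using Nat.le_induction with
    | base => rfl
    | succ n hNn ih => rw [greedySeq_succ, if_neg (not_le.mpr (hneg n hNn)), ih]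
  have hother : ∃ i, N ≤ i ∧ greedySeq q i ≠ greedySeq q N := by
    rcases greedySeq_eq_one_or_neg_one q N with h | h
    · obtain ⟨i, hi, hNi⟩ := h₂.exists_gt N
      exact ⟨i, hNi.le, by rw [hi, h]; decide⟩
    · obtain ⟨i, hi, hNi⟩ := h₁.exists_gt N
      exact ⟨i, hNi.le, by rw [hi, h]; decide⟩
  obtain ⟨i, hNi, hi⟩ := hother
  exact hi (hconst i hNi)

lemma tendsto_greedyAux_snd (hq : q ∈ Set.Ioo (0 : ℝ) 1)
    (h₁ : {i : ℕ | greedySeq q i = 1}.Infinite) (h₂ : {i : ℕ | greedySeq q i = -1}.Infinite) :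
    Tendsto (fun n => (greedyAux q n).2) atTop (𝓝 0) := by
  rw [tendsto_zero_iff_abs_tendsto_zero, Metric.tendsto_atTop]
  intro δ hδ
  obtain ⟨N, hN⟩ := exists_pow_lt_of_lt_one hδ hq.2
  obtain ⟨n, hNn, hn⟩ := frequently_atTop.mp (frequently_margin_nonneg h₁ h₂) N
  have hSn : |(greedyAux q n).2| ≤ q ^ n := by
    rw [← abs_margin, abs_of_nonneg hn]
    exact margin_le_pow q n
  refine ⟨n, fun m hm => ?_⟩
  rw [Real.dist_eq, sub_zero, Function.comp_apply, abs_abs]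
  calc |(greedyAux q m).2| ≤ q ^ n := abs_greedyAux_snd_le_of_le hq.1.le hq.2.le hSn hm
    _ ≤ q ^ N := pow_le_pow_of_le_one hq.1.le hq.2.le hNn
    _ < δ := hN

lemma summable_greedySeq_mul_pow (hq : q ∈ Set.Ioo (0 : ℝ) 1) :
    Summable fun i => (greedySeq q i : ℝ) * q ^ i := by
  refine Summable.of_norm_bounded (summable_geometric_of_lt_one hq.1.le hq.2) fun i => ?_
  rw [norm_mul, Real.norm_eq_abs, Real.norm_eq_abs, abs_greedySeq, one_mul,
    abs_of_nonneg (pow_nonneg hq.1.le i)]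

lemma tsum_greedySeq_mul_pow (hq : q ∈ Set.Ioo (0 : ℝ) 1)
    (h₁ : {i : ℕ | greedySeq q i = 1}.Infinite) (h₂ : {i : ℕ | greedySeq q i = -1}.Infinite) :
    ∑' i, (greedySeq q i : ℝ) * q ^ i = 0 := by
  refine ((summable_greedySeq_mul_pow hq).hasSum_iff_tendsto_nat.mpr ?_).tsum_eq
  rw [← tendsto_add_atTop_iff_nat 1]
  simpa only [greedyAux_snd_eq_sum] using tendsto_greedyAux_snd hq h₁ h₂

end GreedySeq

open GreedySeq in
/-- Fix `q ∈ (0,1)` and suppose the greedy firing sequence takes each of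
the values `1` and `-1` infinitely often. Then
`∑_{i : a_i(q) = 1} q^i = ∑_{i : a_i(q) = -1} q^i = 1/(2(1-q))`; equivalently each
player's probability of eventually winning is `(1-q) · 1/(2(1-q)) = 1/2`. -/
theorem greedySeq_limiting_probabilities_equal (q : ℝ) (hq : q ∈ Set.Ioo (0 : ℝ) 1)
    (hB : {i : ℕ | greedySeq q i = 1}.Infinite)
    (hA : {i : ℕ | greedySeq q i = -1}.Infinite) :
    (∑' i : {i : ℕ // greedySeq q i = 1}, q ^ (i : ℕ)) = 1 / (2 * (1 - q)) ∧
    (∑' i : {i : ℕ // greedySeq q i = -1}, q ^ (i : ℕ)) = 1 / (2 * (1 - q)) ∧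
    (1 - q) * (∑' i : {i : ℕ // greedySeq q i = 1}, q ^ (i : ℕ)) = 1 / 2 ∧
    (1 - q) * (∑' i : {i : ℕ // greedySeq q i = -1}, q ^ (i : ℕ)) = 1 / 2 := by
  obtain ⟨hBob, hAlice⟩ := tsum_subtype_eq_half_of_tsum_sign_mul_eq_zero
    (summable_geometric_of_lt_one hq.1.le hq.2) (greedySeq q)
    (greedySeq_eq_one_or_neg_one q) (tsum_greedySeq_mul_pow hq hB hA)
  have hq₁ : 1 - q ≠ 0 := sub_ne_zero.mpr hq.2.ne'
  rw [tsum_geometric_of_lt_one hq.1.le hq.2] at hBob hAlice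
  rw [hBob, hAlice]
  refine ⟨?_, ?_, ?_, ?_⟩ <;> field_simp
end

section
/- There exist constants C₁, C₂ > 0 and a sequence b : ℕ → {−1, +1} such that for all real x ∈ [0, 1), |∑_{n=0}^{∞} b_n xⁿ| < C₁ e^{−C₂/(1−x)}. That is, the constant zero function can be approximated within exp(−c/(1−x)) on [0,1) by a power series with coefficients ±1. -/
/-!
Take `b n = (-1) ^ ⌊√n⌋`. The sign only flips when `n + 1` is a perfect square, so
`(1 - x) ∑ b n xⁿ = ∑_{k ∈ ℤ} (-1)ᵏ x^(k²)`, a theta function. Writing `x = e^(-t)`, Poisson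
summation turns it into `√(π/t) ∑_{k ∈ ℤ} e^(-π²(k + 1/2)²/t) = O(t^(-1/2) e^(-π²/(4t)))`, and
`t = -log x` is comparable to `1 - x` for `x ≥ 1/2`. For `x ≤ 1/2` the trivial bound
`|∑ b n xⁿ| ≤ 1/(1 - x)` suffices.
-/

open Real

theorem Nat.add_one_eq_sq_of_sqrt_add_one_ne {n : ℕ} (h : Nat.sqrt (n + 1) ≠ Nat.sqrt n) :
    n + 1 = (Nat.sqrt n + 1) ^ 2 := by
  have hle : Nat.sqrt n + 1 ≤ Nat.sqrt (n + 1) :=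
    lt_of_le_of_ne (Nat.sqrt_le_sqrt n.le_succ) h.symm
  have h1 : (Nat.sqrt n + 1) ^ 2 ≤ Nat.sqrt (n + 1) ^ 2 := Nat.pow_le_pow_left hle 2
  have h2 : Nat.sqrt (n + 1) ^ 2 ≤ n + 1 := Nat.sqrt_le' (n + 1)
  have h3 : n < (Nat.sqrt n + 1) ^ 2 := Nat.lt_succ_sqrt' n
  omega

theorem one_sub_mul_tsum_mul_pow {R : Type*} [CommRing R] [TopologicalSpace R]
    [IsTopologicalRing R] [T2Space R] {b : ℕ → R} {x : R} (hs : Summable fun n ↦ b n * x ^ n) :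
    (1 - x) * ∑' n, b n * x ^ n = b 0 + ∑' n, (b (n + 1) - b n) * x ^ (n + 1) := by
  have hshift : Summable fun n ↦ b n * x ^ (n + 1) := by
    simpa only [pow_succ, mul_assoc, mul_comm x] using hs.mul_left x
  calc (1 - x) * ∑' n, b n * x ^ n
      = (b 0 + ∑' n, b (n + 1) * x ^ (n + 1)) - ∑' n, b n * x ^ (n + 1) := by
        have hmul : x * ∑' n, b n * x ^ n = ∑' n, b n * x ^ (n + 1) := by
          rw [← hs.tsum_mul_left]
          simp only [pow_succ, mul_left_comm x, mul_comm x]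
        rw [sub_mul, one_mul, hmul, hs.tsum_eq_zero_add, pow_zero, mul_one]
    _ = b 0 + ∑' n, (b (n + 1) - b n) * x ^ (n + 1) := by
        simp only [sub_mul]
        rw [Summable.tsum_sub ((summable_nat_add_iff 1).mpr hs) hshift, add_sub_assoc]

noncomputable def sqrtSign (n : ℕ) : ℝ := (-1) ^ Nat.sqrt n

theorem sqrtSign_eq_neg_one_or_one (n : ℕ) : sqrtSign n = -1 ∨ sqrtSign n = 1 :=
  (neg_one_pow_eq_or ℝ _).symm

theorem abs_sqrtSign (n : ℕ) : |sqrtSign n| = 1 := by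
  simp [sqrtSign]

theorem norm_sqrtSign_mul_pow (n : ℕ) (x : ℝ) : ‖sqrtSign n * x ^ n‖ = |x| ^ n := by
  rw [norm_mul, norm_eq_abs, norm_eq_abs, abs_sqrtSign, one_mul, abs_pow]

theorem summable_sqrtSign_mul_pow {x : ℝ} (hx : |x| < 1) :
    Summable fun n ↦ sqrtSign n * x ^ n :=
  .of_norm_bounded (summable_geometric_of_lt_one (abs_nonneg x) hx)
    fun n ↦ (norm_sqrtSign_mul_pow n x).le

theorem abs_tsum_sqrtSign_mul_pow_le {x : ℝ} (hx : |x| < 1) :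
    |∑' n, sqrtSign n * x ^ n| ≤ (1 - |x|)⁻¹ :=
  tsum_of_norm_bounded (hasSum_geometric_of_lt_one (abs_nonneg x) hx)
    fun n ↦ (norm_sqrtSign_mul_pow n x).le

theorem tsum_sqrtSign_sub_mul_pow (x : ℝ) :
    ∑' n, (sqrtSign (n + 1) - sqrtSign n) * x ^ (n + 1) =
      2 * ∑' j : ℕ, (-1) ^ (j + 1) * x ^ ((j + 1) ^ 2) := by
  have hinj : Function.Injective fun j : ℕ ↦ j ^ 2 + 2 * j := by
    intro i j h
    simp only at h
    nlinarith
  rw [← tsum_mul_left, ← hinj.tsum_eq]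
  · refine tsum_congr fun j ↦ ?_
    have h1 : Nat.sqrt (j ^ 2 + 2 * j) = j := Nat.sqrt_add_eq' j (by omega)
    have h2 : j ^ 2 + 2 * j + 1 = (j + 1) ^ 2 := by ring
    simp only [sqrtSign, h2, Nat.sqrt_eq', h1]
    ring
  · intro n hn
    have hne : Nat.sqrt (n + 1) ≠ Nat.sqrt n := fun h ↦ hn (by simp [sqrtSign, h])
    have := Nat.add_one_eq_sq_of_sqrt_add_one_ne hne
    exact ⟨Nat.sqrt n, by simp only; nlinarith⟩

theorem one_sub_mul_tsum_sqrtSign_mul_pow {x : ℝ} (hx : |x| < 1) :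
    (1 - x) * ∑' n, sqrtSign n * x ^ n = 1 + 2 * ∑' j : ℕ, (-1) ^ (j + 1) * x ^ ((j + 1) ^ 2) := by
  rw [one_sub_mul_tsum_mul_pow (summable_sqrtSign_mul_pow hx), tsum_sqrtSign_sub_mul_pow]
  simp [sqrtSign]

theorem tsum_int_neg_one_zpow_mul_exp_eq_one_add {t : ℝ} (ht : 0 < t) :
    ∑' n : ℤ, (-1 : ℝ) ^ n * exp (-t * n ^ 2) =
      1 + 2 * ∑' j : ℕ, (-1) ^ (j + 1) * exp (-t) ^ ((j + 1) ^ 2) := by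
  have hterm (j : ℕ) : (-1 : ℝ) ^ ((j + 1 : ℕ) : ℤ) * exp (-t * ((j + 1 : ℕ) : ℤ) ^ 2) =
      (-1) ^ (j + 1) * exp (-t) ^ ((j + 1) ^ 2) := by
    rw [zpow_natCast, ← exp_nat_mul]
    push_cast
    ring_nf
  have hsum : Summable fun j : ℕ ↦ (-1 : ℝ) ^ (j + 1) * exp (-t) ^ ((j + 1) ^ 2) := by
    refine Summable.of_norm_bounded (summable_geometric_of_lt_one (exp_pos _).le
      (exp_lt_one_iff.mpr (neg_neg_of_pos ht))) fun j ↦ ?_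
    rw [norm_mul, norm_pow, norm_neg, norm_one, one_pow, one_mul, norm_pow,
      norm_of_nonneg (exp_pos _).le]
    exact pow_le_pow_of_le_one (exp_pos _).le (exp_lt_one_iff.mpr (neg_neg_of_pos ht)).le
      (by nlinarith)
  have hpos : (fun j : ℕ ↦ (-1 : ℝ) ^ ((j : ℤ) + 1) * exp (-t * (((j : ℤ) + 1 : ℤ) : ℝ) ^ 2)) =
      fun j ↦ (-1) ^ (j + 1) * exp (-t) ^ ((j + 1) ^ 2) := by
    funext j; exact_mod_cast hterm j
  have hneg :
      (fun j : ℕ ↦ (-1 : ℝ) ^ (-((j : ℤ) + 1)) * exp (-t * ((-((j : ℤ) + 1) : ℤ) : ℝ) ^ 2)) =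
      fun j ↦ (-1) ^ (j + 1) * exp (-t) ^ ((j + 1) ^ 2) := by
    funext j
    rw [← hterm j, zpow_neg, ← inv_zpow, inv_neg_one]
    push_cast
    ring_nf
  rw [tsum_of_add_one_of_neg_add_one (hpos ▸ hsum) (hneg ▸ hsum), hpos, hneg]
  norm_num
  ring

theorem tsum_int_neg_one_zpow_mul_exp_eq_sqrt_mul {t : ℝ} (ht : 0 < t) :
    ∑' n : ℤ, (-1 : ℝ) ^ n * exp (-t * n ^ 2) =
      √(π / t) * ∑' n : ℤ, exp (-(π ^ 2 / t) * (n + 1 / 2) ^ 2) := by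
  have ha : 0 < ((t / π : ℝ) : ℂ).re := by simpa using div_pos ht pi_pos
  -- the imaginary shift `-i/2` of the Gaussian produces the sign `(-1)^n`
  have key := Complex.tsum_exp_neg_quadratic ha (-Complex.I / 2)
  have hlhs (n : ℤ) : Complex.exp (-π * (t / π : ℝ) * n ^ 2 + 2 * π * (-Complex.I / 2) * n) =
      ((-1 : ℝ) ^ n * exp (-t * n ^ 2) : ℝ) := by
    have hsign : Complex.exp (2 * π * (-Complex.I / 2) * n) = (-1) ^ n := by
      rw [show 2 * π * (-Complex.I / 2) * n = n * -(π * Complex.I) by ring, Complex.exp_int_mul,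
        Complex.exp_neg, Complex.exp_pi_mul_I, inv_neg_one]
    rw [Complex.exp_add, hsign]
    push_cast
    field_simp
  have hrhs (n : ℤ) : Complex.exp (-π / (t / π : ℝ) * (n + Complex.I * (-Complex.I / 2)) ^ 2) =
      (exp (-(π ^ 2 / t) * (n + 1 / 2) ^ 2) : ℝ) := by
    have : Complex.I * (-Complex.I / 2) = 1 / 2 := by
      rw [mul_div_assoc', mul_neg, Complex.I_mul_I]; norm_num
    rw [this]
    push_cast
    congr 1
    field_simp
  have hroot : 1 / ((t / π : ℝ) : ℂ) ^ (1 / 2 : ℂ) = (√(π / t) : ℝ) := by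
    rw [← inv_div t, sqrt_inv, sqrt_eq_rpow, Complex.ofReal_inv,
      Complex.ofReal_cpow (div_pos ht pi_pos).le, one_div]
    push_cast
    rfl
  simp only [hlhs, hrhs, hroot, ← Complex.ofReal_tsum, ← Complex.ofReal_mul] at key
  exact_mod_cast key

theorem tsum_int_exp_neg_mul_add_half_sq_le {c : ℝ} (hc : 1 ≤ c) :
    ∑' n : ℤ, exp (-c * (n + 1 / 2) ^ 2) ≤ 4 * exp (-c / 4) := by
  set g : ℕ → ℝ := fun n ↦ exp (-c * (n + 1 / 2) ^ 2)
  have hq0 : 0 ≤ exp (-c) := (exp_pos _).le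
  have hq : exp (-c) ≤ 1 / 2 := by
    rw [exp_neg, inv_le_comm₀ (exp_pos c) (by norm_num)]
    linarith [add_one_le_exp c]
  have hgeo : HasSum (fun n : ℕ ↦ exp (-c / 4) * exp (-c) ^ n) (exp (-c / 4) * (1 - exp (-c))⁻¹) :=
    (hasSum_geometric_of_lt_one hq0 (by linarith)).mul_left _
  -- `(n + 1/2)^2 = 1/4 + n (n + 1) ≥ 1/4 + n`
  have hg_le (n : ℕ) : g n ≤ exp (-c / 4) * exp (-c) ^ n := by
    rw [← exp_nat_mul, ← exp_add, exp_le_exp]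
    have : (n : ℝ) ≤ (n + 1 / 2) ^ 2 - 1 / 4 := by nlinarith [(n.cast_nonneg : (0 : ℝ) ≤ n)]
    nlinarith
  have hg : Summable g := hgeo.summable.of_nonneg_of_le (fun _ ↦ (exp_pos _).le) hg_le
  have hg_sum : ∑' n, g n ≤ 2 * exp (-c / 4) := calc
    ∑' n, g n ≤ exp (-c / 4) * (1 - exp (-c))⁻¹ := hasSum_le hg_le hg.hasSum hgeo
    _ ≤ exp (-c / 4) * 2 := by
      gcongr
      rw [inv_le_comm₀ (by linarith) (by norm_num)]
      linarith
    _ = 2 * exp (-c / 4) := mul_comm _ _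
  have hneg : (fun n : ℕ ↦ exp (-c * (((-((n : ℤ) + 1) : ℤ) : ℝ) + 1 / 2) ^ 2)) = g := by
    funext n
    simp only [g]
    push_cast
    ring_nf
  have hpos : (fun n : ℕ ↦ exp (-c * (((n : ℤ) : ℝ) + 1 / 2) ^ 2)) = g := by
    funext n
    simp only [g, Int.cast_natCast]
  rw [tsum_of_nat_of_neg_add_one (hpos ▸ hg) (hneg ▸ hg), hpos, hneg]
  linarith

theorem abs_tsum_int_neg_one_zpow_mul_exp_le {t : ℝ} (ht : 0 < t) (htπ : t ≤ π ^ 2) :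
    |∑' n : ℤ, (-1 : ℝ) ^ n * exp (-t * n ^ 2)| ≤ 4 * √(π / t) * exp (-π ^ 2 / (4 * t)) := by
  rw [tsum_int_neg_one_zpow_mul_exp_eq_sqrt_mul ht, abs_mul, abs_of_nonneg (sqrt_nonneg _),
    abs_of_nonneg (tsum_nonneg fun _ ↦ (exp_pos _).le)]
  calc √(π / t) * ∑' n : ℤ, exp (-(π ^ 2 / t) * (n + 1 / 2) ^ 2)
      ≤ √(π / t) * (4 * exp (-(π ^ 2 / t) / 4)) := by
        gcongr
        exact tsum_int_exp_neg_mul_add_half_sq_le ((one_le_div ht).mpr htπ)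
    _ = 4 * √(π / t) * exp (-π ^ 2 / (4 * t)) := by ring_nf

theorem one_sub_mul_abs_tsum_sqrtSign_mul_pow_le {x : ℝ} (hx : 1 / 2 ≤ x) (hx1 : x < 1) :
    (1 - x) * |∑' n, sqrtSign n * x ^ n| ≤ 4 * √(π / (1 - x)) * exp (-π ^ 2 / (8 * (1 - x))) := by
  have hx0 : 0 < x := by linarith
  set t := -log x with ht_def
  have hxt : x = exp (-t) := by rw [ht_def, neg_neg, exp_log hx0]
  have ht_lower : 1 - x ≤ t := by linarith [log_le_sub_one_of_pos hx0]
  have ht_upper : t ≤ 2 * (1 - x) := by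
    have := one_sub_inv_le_log_of_pos hx0
    have : x⁻¹ ≤ 2 := by rw [inv_le_comm₀ hx0 (by norm_num)]; linarith
    nlinarith [mul_inv_cancel₀ hx0.ne']
  have ht : 0 < t := by linarith
  have htπ : t ≤ π ^ 2 := by nlinarith [pi_gt_three]
  rw [← abs_of_pos (by linarith : 0 < 1 - x), ← abs_mul, abs_of_pos (by linarith : 0 < 1 - x),
    one_sub_mul_tsum_sqrtSign_mul_pow (by rw [abs_of_pos hx0]; exact hx1), hxt,
    ← tsum_int_neg_one_zpow_mul_exp_eq_one_add ht, ← hxt]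
  calc |∑' n : ℤ, (-1 : ℝ) ^ n * exp (-t * n ^ 2)|
      ≤ 4 * √(π / t) * exp (-π ^ 2 / (4 * t)) := abs_tsum_int_neg_one_zpow_mul_exp_le ht htπ
    _ ≤ 4 * √(π / (1 - x)) * exp (-π ^ 2 / (8 * (1 - x))) := by
      rw [neg_div, neg_div]
      gcongr ?_ * √(π / ?_) * exp (-(π ^ 2 / ?_))
      linarith

theorem abs_tsum_sqrtSign_mul_pow_lt_of_half_le {x : ℝ} (hx : 1 / 2 ≤ x) (hx1 : x < 1) :
    |∑' n, sqrtSign n * x ^ n| < 20 * exp (-(1 / 8) / (1 - x)) := by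
  set δ := 1 - x
  have hδ : 0 < δ := by linarith
  have hδ1 : δ ≤ 1 := by linarith
  have hsqrt : √(π / δ) ≤ 2 / δ := by
    rw [sqrt_le_left (by positivity), div_pow, div_le_div_iff₀ hδ (by positivity)]
    nlinarith [pi_lt_four]
  have hquad : exp (-1 / δ) ≤ 2 * δ ^ 2 := by
    have := quadratic_le_exp_of_nonneg (one_div_pos.mpr hδ).le
    rw [neg_div, exp_neg, inv_le_comm₀ (exp_pos _) (by positivity)]
    calc (2 * δ ^ 2)⁻¹ = (1 / δ) ^ 2 / 2 := by field_simp
      _ ≤ exp (1 / δ) := by nlinarith [(one_div_pos.mpr hδ).le]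
  -- `π² / 8 > 1 + 1 / 8`, and the surplus `e^(-1/δ)` absorbs the factor `δ^(-3/2)`
  have hexp : exp (-π ^ 2 / (8 * δ)) ≤ exp (-1 / δ) * exp (-(1 / 8) / δ) := by
    rw [← exp_add, exp_le_exp, show -1 / δ + -(1 / 8) / δ = -(9 / 8) / δ by ring,
      div_le_div_iff₀ (by positivity) hδ]
    have : 9 ≤ π ^ 2 := by nlinarith [pi_gt_three]
    nlinarith
  have hbound : δ * |∑' n, sqrtSign n * x ^ n| < δ * (20 * exp (-(1 / 8) / δ)) := calc
    δ * |∑' n, sqrtSign n * x ^ n| ≤ 4 * √(π / δ) * exp (-π ^ 2 / (8 * δ)) :=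
      one_sub_mul_abs_tsum_sqrtSign_mul_pow_le hx hx1
    _ ≤ 4 * (2 / δ) * (2 * δ ^ 2 * exp (-(1 / 8) / δ)) := by
      gcongr
      exact hexp.trans (mul_le_mul_of_nonneg_right hquad (exp_pos _).le)
    _ = δ * (16 * exp (-(1 / 8) / δ)) := by field_simp; ring
    _ < δ * (20 * exp (-(1 / 8) / δ)) := by gcongr; norm_num
  exact lt_of_mul_lt_mul_left hbound hδ.le

theorem abs_tsum_sqrtSign_mul_pow_lt_of_le_half {x : ℝ} (hx0 : 0 ≤ x) (hx : x ≤ 1 / 2) :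
    |∑' n, sqrtSign n * x ^ n| < 20 * exp (-(1 / 8) / (1 - x)) := by
  have hδ : 1 / 2 ≤ 1 - x := by linarith
  have habs : |x| < 1 := by rw [abs_of_nonneg hx0]; linarith
  calc |∑' n, sqrtSign n * x ^ n| ≤ (1 - |x|)⁻¹ := abs_tsum_sqrtSign_mul_pow_le habs
    _ ≤ 2 := by rw [abs_of_nonneg hx0, inv_le_comm₀ (by linarith) (by norm_num)]; linarith
    _ < 20 * (-(1 / 4) + 1) := by norm_num
    _ ≤ 20 * exp (-(1 / 8) / (1 - x)) := by
      gcongr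
      refine le_trans ?_ (add_one_le_exp _)
      have : 1 / 8 / (1 - x) ≤ 1 / 4 := by rw [div_le_iff₀ (by linarith)]; linarith
      linarith [neg_div (1 - x) (1 / 8 : ℝ)]

/-- there exist `C₁, C₂ > 0` and a `±1` coefficient sequence `b` whose
power series approximates the zero function on `[0,1)` within `C₁ exp(-C₂/(1-x))`. -/
theorem zero_function_one_bit_approximation :
    ∃ C₁ > (0 : ℝ), ∃ C₂ > (0 : ℝ), ∃ b : ℕ → ℝ, (∀ n, b n = -1 ∨ b n = 1) ∧
      ∀ x ∈ Set.Ico (0 : ℝ) 1,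
        |∑' n : ℕ, b n * x ^ n| < C₁ * Real.exp (-C₂ / (1 - x)) := by
  refine ⟨20, by norm_num, 1 / 8, by norm_num, sqrtSign, sqrtSign_eq_neg_one_or_one, ?_⟩
  rintro x ⟨hx0, hx1⟩
  rcases le_or_gt x (1 / 2) with hx | hx
  · exact abs_tsum_sqrtSign_mul_pow_lt_of_le_half hx0 hx
  · exact abs_tsum_sqrtSign_mul_pow_lt_of_half_le hx.le hx1
end
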